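/- arXiv:2008.03885 — 2 statements merged into one kernel-verified Lean document; each statement's English description precedes it below -/
import Mathlib

section
/- Let ω ∈ ℝ, θ ∈ ℝ, ξ = sin²(θ/2), and θ̄ = θ + π. Define the black-point partial sweep B on u : ℤ → ℂ by (B u)(j) = u(j) if j is odd, and (B u)(j) = (1−ω)u(j) + (ω/2)(u(j−1) + u(j+1)) if j is even. Then for all a, b ∈ ℂ, B(a·φ_θ + b·φ_θ̄) = a′·φ_θ + b′·φ_θ̄, where φ_θ(j) = exp(iθj) and [a′; b′] = S^B(θ)·[a; b] with S^B(θ) = I − ω·[[1, 1], [1, 1]]·diag(ξ, 1−ξ). -/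
/-!
On the span of `φ_θ` and `φ_{θ+π} = (-1)^j φ_θ` the neighbour sum acts as multiplication by
`2 cos θ = 2 (1 - 2ξ)` on `φ_θ` and by `-2 (1 - 2ξ)` on `φ_{θ+π}`. At odd points the sweep is the
identity and the two modes differ by a sign; at even points they coincide, and the relaxed
value is `a + b - 2ω (ξ a + (1 - ξ) b)`. These are exactly `a' - b'` and `a' + b'` for
`(a', b') = S^B(θ) (a, b)`.
-/

open Complex

noncomputable section

def blackSweep (ω : ℂ) (u : ℤ → ℂ) (j : ℤ) : ℂ :=
  if Even j then (1 - ω) * u j + ω / 2 * (u (j - 1) + u (j + 1)) else u j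

theorem blackSweep_add_alternating (ω ξ a b : ℂ) (φ : ℤ → ℂ)
    (hφ : ∀ j, φ (j - 1) + φ (j + 1) = 2 * (1 - 2 * ξ) * φ j) :
    blackSweep ω (fun j => a * φ j + b * ((-1) ^ j * φ j)) =
      fun j => (a - ω * (ξ * a + (1 - ξ) * b)) * φ j +
        (b - ω * (ξ * a + (1 - ξ) * b)) * ((-1) ^ j * φ j) := by
  funext j
  dsimp only [blackSweep]
  rcases Int.even_or_odd j with hj | hj
  · have hprev : ((-1 : ℂ)) ^ (j - 1) = -1 := by
      rw [zpow_sub_one₀ (by norm_num), hj.neg_one_zpow]; norm_num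
    have hnext : ((-1 : ℂ)) ^ (j + 1) = -1 := by
      rw [zpow_add_one₀ (by norm_num), hj.neg_one_zpow]; norm_num
    rw [if_pos hj, hj.neg_one_zpow, hprev, hnext]
    linear_combination ω / 2 * (a - b) * hφ j
  · rw [if_neg (Int.not_even_iff_odd.mpr hj), hj.neg_one_zpow]
    ring

theorem exp_I_mul_sub_one_add_exp_I_mul_add_one (α z : ℂ) :
    exp (I * α * (z - 1)) + exp (I * α * (z + 1)) = 2 * cos α * exp (I * α * z) := by
  rw [two_cos, show I * α * (z - 1) = I * α * z + -α * I by ring,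
    show I * α * (z + 1) = I * α * z + α * I by ring, exp_add, exp_add]
  ring

theorem exp_I_mul_add_pi_mul_int (α : ℂ) (j : ℤ) :
    exp (I * (α + Real.pi) * j) = (-1) ^ j * exp (I * α * j) := by
  rw [show I * (α + Real.pi) * j = I * α * j + j * (Real.pi * I) by ring, exp_add, exp_int_mul,
    exp_pi_mul_I, mul_comm]

theorem blackSweepSymbol_mulVec (ω ξ a b : ℂ) :
    (1 - ω • (!![1, 1; 1, 1] * !![ξ, 0; 0, 1 - ξ])).mulVec ![a, b] =
      ![a - ω * (ξ * a + (1 - ξ) * b), b - ω * (ξ * a + (1 - ξ) * b)] := by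
  ext i
  fin_cases i <;> simp [Matrix.mulVec, dotProduct, Fin.sum_univ_two] <;> ring

end

open Matrix in
/-- The black partial sweep (relaxing even points) of damped red-black relaxation for the 1D
Poisson stencil leaves `𝔼_θ = span{φ_θ, φ_{θ+π}}` invariant, acting on coefficient vectors
by the matrix symbol `S^B(θ) = I − ω·[[1,1],[1,1]]·diag(ξ, 1−ξ)`, `ξ = sin²(θ/2)`. -/
theorem black_sweep_1d_symbol (ω θ : ℝ)
    (ξ : ℝ) (hξ : ξ = (Real.sin (θ / 2)) ^ 2)
    (φ φbar : ℤ → ℂ)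
    (hφ : ∀ j : ℤ, φ j = Complex.exp (Complex.I * θ * j))
    (hφbar : ∀ j : ℤ, φbar j = Complex.exp (Complex.I * (θ + Real.pi) * j))
    (B : (ℤ → ℂ) → (ℤ → ℂ))
    (hB : ∀ (u : ℤ → ℂ) (j : ℤ),
      B u j = if Even j then
          (1 - (ω : ℂ)) * u j + ((ω : ℂ) / 2) * (u (j - 1) + u (j + 1))
        else u j)
    (SB : Matrix (Fin 2) (Fin 2) ℂ)
    (hSB : SB = 1 - (ω : ℂ) •
      (!![1, 1; 1, 1] * !![(ξ : ℂ), 0; 0, 1 - (ξ : ℂ)])) :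
    ∀ a b : ℂ,
      B (fun j => a * φ j + b * φbar j)
        = fun j => (SB.mulVec ![a, b] 0) * φ j + (SB.mulVec ![a, b] 1) * φbar j := by
  intro a b
  have hB' : B = blackSweep ω := funext fun u => funext (hB u)
  have hφbar' : φbar = fun j => (-1) ^ j * φ j := by
    funext j; rw [hφbar, hφ, exp_I_mul_add_pi_mul_int]
  have hcos : Complex.cos θ = 1 - 2 * ξ := by
    rw [show (θ : ℂ) = 2 * (θ / 2 : ℝ) by push_cast; ring, cos_two_mul_eq_one_sub, hξ]
    push_cast; rfl
  have hneighbours : ∀ j, φ (j - 1) + φ (j + 1) = 2 * (1 - 2 * (ξ : ℂ)) * φ j := by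
    intro j
    rw [hφ, hφ, hφ, ← hcos]
    push_cast
    exact exp_I_mul_sub_one_add_exp_I_mul_add_one θ j
  rw [hB', hφbar', blackSweep_add_alternating ω ξ a b φ hneighbours, hSB, blackSweepSymbol_mulVec]
  rfl
end

section
/- Let ω ∈ ℝ, θ = (θ₁, θ₂) ∈ ℝ², ξ = (1/2)(sin²(θ₁/2) + sin²(θ₂/2)), and θ̄ = (θ₁+π, θ₂+π). Define the two-dimensional black partial sweep B on u : ℤ² → ℂ by (B u)(j₁,j₂) = u(j₁,j₂) if j₁+j₂ is odd, and (B u)(j₁,j₂) = (1−ω)u(j₁,j₂) + (ω/4)(u(j₁−1,j₂) + u(j₁+1,j₂) + u(j₁,j₂−1) + u(j₁,j₂+1)) if j₁+j₂ is even. Then for all a, b ∈ ℂ, B(a·φ_θ + b·φ_θ̄) = a′·φ_θ + b′·φ_θ̄ with [a′; b′] = (I₂ − ω·[[1, 1], [1, 1]]·diag(ξ, 1−ξ))·[a; b]. -/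
/-!
`φ_θ` and `φ_θ̄` are plane waves, so the four-neighbour sum multiplies `φ_θ` by
`2(cos θ₁ + cos θ₂) = 4 − 8ξ` and `φ_θ̄` by its negative, since the shift by `(π, π)` flips both
cosines. As `φ_θ̄ = (−1)^(j₁+j₂) φ_θ`, at every point both sides are scalar multiples of `φ_θ`:
on red points the identity reduces to `a − b = a′ − b′`, on black points to
`(1 − ω)(a + b) + ω(1 − 2ξ)(a − b) = a′ + b′`.
-/

noncomputable def planeWave (θ₁ θ₂ : ℝ) (j : ℤ × ℤ) : ℂ :=
  Complex.exp (Complex.I * (θ₁ * j.1 + θ₂ * j.2))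

lemma planeWave_shift (θ₁ θ₂ : ℝ) (j₁ j₂ k₁ k₂ : ℤ) :
    planeWave θ₁ θ₂ (j₁ + k₁, j₂ + k₂) =
      Complex.exp (Complex.I * (θ₁ * k₁ + θ₂ * k₂)) * planeWave θ₁ θ₂ (j₁, j₂) := by
  simp only [planeWave, ← Complex.exp_add]
  push_cast
  ring_nf

lemma planeWave_neighbour_sum (θ₁ θ₂ : ℝ) (j₁ j₂ : ℤ) :
    planeWave θ₁ θ₂ (j₁ - 1, j₂) + planeWave θ₁ θ₂ (j₁ + 1, j₂) +
        planeWave θ₁ θ₂ (j₁, j₂ - 1) + planeWave θ₁ θ₂ (j₁, j₂ + 1) =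
      2 * ((Real.cos θ₁ + Real.cos θ₂ : ℝ) : ℂ) * planeWave θ₁ θ₂ (j₁, j₂) := by
  have shift (k₁ k₂ : ℤ) := planeWave_shift θ₁ θ₂ j₁ j₂ k₁ k₂
  have left := shift (-1) 0
  have right := shift 1 0
  have down := shift 0 (-1)
  have up := shift 0 1
  simp only [← sub_eq_add_neg, add_zero, Int.cast_neg, Int.cast_one, Int.cast_zero] at left right down up
  rw [left, right, down, up, Complex.ofReal_add, Complex.ofReal_cos, Complex.ofReal_cos,
    Complex.cos, Complex.cos]
  ring_nf

lemma planeWave_add_pi (θ₁ θ₂ : ℝ) (j : ℤ × ℤ) :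
    planeWave (θ₁ + Real.pi) (θ₂ + Real.pi) j = (-1) ^ (j.1 + j.2) * planeWave θ₁ θ₂ j := by
  rw [← Complex.exp_pi_mul_I, ← Complex.exp_int_mul, planeWave, planeWave, ← Complex.exp_add]
  push_cast
  ring_nf

lemma cos_add_cos_eq_sub_sin_sq_half (θ₁ θ₂ : ℝ) :
    Real.cos θ₁ + Real.cos θ₂ = 2 - 2 * (Real.sin (θ₁ / 2) ^ 2 + Real.sin (θ₂ / 2) ^ 2) := by
  rw [Real.sin_sq_eq_half_sub, Real.sin_sq_eq_half_sub, mul_div_cancel₀ _ two_ne_zero,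
    mul_div_cancel₀ _ two_ne_zero]
  ring

lemma symbol_mulVec (ω ξ : ℂ) (a b : ℂ) :
    (1 - ω • (!![1, 1; 1, 1] * !![ξ, 0; 0, 1 - ξ])).mulVec ![a, b] =
      ![(1 - ω * ξ) * a - ω * (1 - ξ) * b, -(ω * ξ) * a + (1 - ω * (1 - ξ)) * b] := by
  ext i
  fin_cases i <;> simp [Matrix.mulVec, dotProduct, Fin.sum_univ_two, sub_eq_add_neg]

open Matrix in
/-- The 2D black partial sweep (relaxing points with `j₁+j₂` even) of damped red-black
relaxation for the five-point Poisson stencil leaves `𝔼_θ = span{φ_θ, φ_θ̄}` invariant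
(`θ̄ = (θ₁+π, θ₂+π)`), with matrix symbol
`I − ω·[[1,1],[1,1]]·diag(ξ, 1−ξ)`, where
`ξ = (1/2)(sin²(θ₁/2)+sin²(θ₂/2))`. -/
theorem black_sweep_2d_symbol (ω θ₁ θ₂ : ℝ)
    (ξ : ℝ) (hξ : ξ = (1 / 2) * ((Real.sin (θ₁ / 2)) ^ 2 + (Real.sin (θ₂ / 2)) ^ 2))
    (φ φbar : ℤ × ℤ → ℂ)
    (hφ : ∀ j : ℤ × ℤ, φ j = Complex.exp (Complex.I * (θ₁ * j.1 + θ₂ * j.2)))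
    (hφbar : ∀ j : ℤ × ℤ, φbar j =
      Complex.exp (Complex.I * ((θ₁ + Real.pi) * j.1 + (θ₂ + Real.pi) * j.2)))
    (B : (ℤ × ℤ → ℂ) → (ℤ × ℤ → ℂ))
    (hB : ∀ (u : ℤ × ℤ → ℂ) (j₁ j₂ : ℤ),
      B u (j₁, j₂) = if Even (j₁ + j₂) then
          (1 - (ω : ℂ)) * u (j₁, j₂) + ((ω : ℂ) / 4) *
            (u (j₁ - 1, j₂) + u (j₁ + 1, j₂) + u (j₁, j₂ - 1) + u (j₁, j₂ + 1))
        else u (j₁, j₂))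
    (SB : Matrix (Fin 2) (Fin 2) ℂ)
    (hSB : SB = 1 - (ω : ℂ) •
      (!![1, 1; 1, 1] * !![(ξ : ℂ), 0; 0, 1 - (ξ : ℂ)])) :
    ∀ a b : ℂ,
      B (fun j => a * φ j + b * φbar j)
        = fun j => (SB.mulVec ![a, b] 0) * φ j + (SB.mulVec ![a, b] 1) * φbar j := by
  intro a b
  obtain rfl : φ = planeWave θ₁ θ₂ := funext hφ
  obtain rfl : φbar = planeWave (θ₁ + Real.pi) (θ₂ + Real.pi) := by
    funext j; rw [hφbar, planeWave]; push_cast; rfl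
  have hcos : 2 * ((Real.cos θ₁ + Real.cos θ₂ : ℝ) : ℂ) = 4 - 8 * ξ := by
    rw [hξ, cos_add_cos_eq_sub_sin_sq_half]; push_cast; ring
  have hcos_pi : Real.cos (θ₁ + Real.pi) + Real.cos (θ₂ + Real.pi) =
      -(Real.cos θ₁ + Real.cos θ₂) := by
    rw [Real.cos_add_pi, Real.cos_add_pi]; ring
  funext ⟨j₁, j₂⟩
  have hsum := planeWave_neighbour_sum θ₁ θ₂ j₁ j₂
  have hsum_bar := planeWave_neighbour_sum (θ₁ + Real.pi) (θ₂ + Real.pi) j₁ j₂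
  rw [hcos_pi, Complex.ofReal_neg, planeWave_add_pi θ₁ θ₂ (j₁, j₂)] at hsum_bar
  rw [hB, hSB, symbol_mulVec, planeWave_add_pi θ₁ θ₂ (j₁, j₂)]
  simp only [Matrix.cons_val_zero, Matrix.cons_val_one]
  split_ifs with hparity
  · rw [Even.neg_one_zpow hparity] at hsum_bar ⊢
    linear_combination (ω / 4 : ℂ) * (a * hsum + b * hsum_bar)
      + (ω / 4 : ℂ) * (a - b) * planeWave θ₁ θ₂ (j₁, j₂) * hcos
  · rw [Odd.neg_one_zpow (Int.not_even_iff_odd.mp hparity)]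
    ring
end
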